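/- Let φ(x) = -x^3 + bx^2 + cx + d with b > 0, c < 0, b^2 > -3c, and let x_m < x_M be the two roots of φ'(x)=0. Assume φ > 0 on the interval [x_l, x_m] and on [x_M, x_h], where x_l < x_m < x_M < x_h. Define T_1(ℓ) = ∫_{x_l}^{x_m} φ'(x)/((x-ℓ)φ(x)) dx and T_2(ℓ) = ∫_{x_M}^{x_h} φ'(x)/((ℓ-x)φ(x)) dx for x_m < ℓ < x_M. Then T_1 is strictly decreasing in ℓ and T_2 is strictly increasing in ℓ on (x_m, x_M); consequently the ratio T_1/T_2 is strictly decreasing in ℓ. -/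

import Mathlib

open Set intervalIntegral

private lemma aux_div_le (a u v p : ℝ) (ha : a ≤ 0) (hv : v < 0) (hp : 0 < p)
    (huv : u ≤ v) : a / (u * p) ≤ a / (v * p) := by
  have hu : u < 0 := lt_of_le_of_lt huv hv
  have e1 : a / (u * p) = (-a) / (-(u * p)) := (neg_div_neg_eq a (u * p)).symm
  have e2 : a / (v * p) = (-a) / (-(v * p)) := (neg_div_neg_eq a (v * p)).symm
  rw [e1, e2, div_le_div_iff₀ (by nlinarith) (by nlinarith)]
  nlinarith [mul_le_mul_of_nonpos_left (mul_le_mul_of_nonneg_right huv hp.le) ha]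

private lemma aux_div_lt (a u v p : ℝ) (ha : a < 0) (hv : v < 0) (hp : 0 < p)
    (huv : u < v) : a / (u * p) < a / (v * p) := by
  have hu : u < 0 := huv.trans hv
  have e1 : a / (u * p) = (-a) / (-(u * p)) := (neg_div_neg_eq a (u * p)).symm
  have e2 : a / (v * p) = (-a) / (-(v * p)) := (neg_div_neg_eq a (v * p)).symm
  rw [e1, e2, div_lt_div_iff₀ (by nlinarith) (by nlinarith)]
  nlinarith [mul_lt_mul_of_neg_left (mul_lt_mul_of_pos_right huv hp) ha]

theorem T1_T2_monotone (b c d : ℝ) (hb : 0 < b) (hc : c < 0) (hbc : b ^ 2 > -3 * c)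
    (φ : ℝ → ℝ) (hφ : ∀ x, φ x = -x ^ 3 + b * x ^ 2 + c * x + d)
    (xm xM : ℝ) (hroots : xm < xM ∧ deriv φ xm = 0 ∧ deriv φ xM = 0)
    (xl xh : ℝ) (hord : xl < xm ∧ xm < xM ∧ xM < xh)
    (hpos1 : ∀ x ∈ Icc xl xm, 0 < φ x) (hpos2 : ∀ x ∈ Icc xM xh, 0 < φ x)
    (T1 T2 : ℝ → ℝ)
    (hT1 : ∀ ℓ, T1 ℓ = ∫ x in xl..xm, deriv φ x / ((x - ℓ) * φ x))
    (hT2 : ∀ ℓ, T2 ℓ = ∫ x in xM..xh, deriv φ x / ((ℓ - x) * φ x)) :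
    StrictAntiOn T1 (Ioo xm xM) ∧ StrictMonoOn T2 (Ioo xm xM) ∧
      StrictAntiOn (fun ℓ => T1 ℓ / T2 ℓ) (Ioo xm xM) := by
  obtain ⟨hmM, hdm, hdM⟩ := hroots
  obtain ⟨hlm, -, hMh⟩ := hord
  have hφeq : φ = fun x => -x ^ 3 + b * x ^ 2 + c * x + d := funext hφ
  have hφcont : Continuous φ := by rw [hφeq]; fun_prop
  -- derivative formula
  have hderiv : ∀ x : ℝ, deriv φ x = -3 * x ^ 2 + 2 * b * x + c := by
    intro x
    have key : HasDerivAt (fun x : ℝ => -x ^ 3 + b * x ^ 2 + c * x + d)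
        (-3 * x ^ 2 + 2 * b * x + c) x := by
      have h := (((hasDerivAt_pow 3 x).neg.add ((hasDerivAt_pow 2 x).const_mul b)).add
        ((hasDerivAt_id x).const_mul c)).add_const d
      exact h.congr_deriv (by norm_num; ring)
    rw [hφeq]
    exact key.deriv
  have e1 : -3 * xm ^ 2 + 2 * b * xm + c = 0 := by rw [← hderiv xm]; exact hdm
  have e2 : -3 * xM ^ 2 + 2 * b * xM + c = 0 := by rw [← hderiv xM]; exact hdM
  have hne : xm - xM ≠ 0 := sub_ne_zero.mpr hmM.ne
  have h2b : 2 * b = 3 * (xm + xM) := by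
    have key : (xm - xM) * (2 * b - 3 * (xm + xM)) = 0 := by linear_combination e1 - e2
    rcases mul_eq_zero.mp key with h | h
    · exact absurd h hne
    · linarith
  have hcc : c = -3 * xm * xM := by linear_combination e1 - xm * h2b
  have hfac : ∀ x : ℝ, deriv φ x = -3 * (x - xm) * (x - xM) := by
    intro x
    rw [hderiv]
    linear_combination x * h2b + hcc
  have hdcont : Continuous (deriv φ) := by
    have : deriv φ = fun x => -3 * (x - xm) * (x - xM) := funext hfac
    rw [this]; fun_prop
  -- sign facts
  have hd1 : ∀ x ∈ Icc xl xm, deriv φ x ≤ 0 := by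
    intro x hx
    rw [hfac]
    nlinarith [hx.2, hmM]
  have hd2 : ∀ x ∈ Icc xM xh, deriv φ x ≤ 0 := by
    intro x hx
    rw [hfac]
    nlinarith [hx.1, hmM]
  have hdl : deriv φ xl < 0 := by rw [hfac]; nlinarith
  have hdh : deriv φ xh < 0 := by rw [hfac]; nlinarith
  -- continuity of the integrands
  have hcont1 : ∀ ℓ ∈ Ioo xm xM,
      ContinuousOn (fun x => deriv φ x / ((x - ℓ) * φ x)) (Icc xl xm) := by
    intro ℓ hℓ
    apply ContinuousOn.div hdcont.continuousOn
      (((continuous_id.sub continuous_const).mul hφcont).continuousOn)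
    intro x hx
    have h1 : x - ℓ < 0 := by have := hx.2; have := hℓ.1; linarith
    exact mul_ne_zero h1.ne (hpos1 x hx).ne'
  have hcont2 : ∀ ℓ ∈ Ioo xm xM,
      ContinuousOn (fun x => deriv φ x / ((ℓ - x) * φ x)) (Icc xM xh) := by
    intro ℓ hℓ
    apply ContinuousOn.div hdcont.continuousOn
      (((continuous_const.sub continuous_id).mul hφcont).continuousOn)
    intro x hx
    have h1 : ℓ - x < 0 := by have := hx.1; have := hℓ.2; linarith
    exact mul_ne_zero h1.ne (hpos2 x hx).ne'
  -- T1 strictly decreasing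
  have hT1anti : StrictAntiOn T1 (Ioo xm xM) := by
    intro ℓ1 h1 ℓ2 h2 h12
    rw [hT1 ℓ1, hT1 ℓ2]
    apply integral_lt_integral_of_continuousOn_of_le_of_exists_lt hlm
      (hcont1 ℓ2 h2) (hcont1 ℓ1 h1)
    · intro x hx
      have hxIcc : x ∈ Icc xl xm := ⟨hx.1.le, hx.2⟩
      exact aux_div_le _ _ _ _ (hd1 x hxIcc) (by have := hx.2; have := h1.1; linarith)
        (hpos1 x hxIcc) (by linarith)
    · refine ⟨xl, ⟨le_rfl, hlm.le⟩, ?_⟩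
      exact aux_div_lt _ _ _ _ hdl (by have := h1.1; linarith)
        (hpos1 xl ⟨le_rfl, hlm.le⟩) (by linarith)
  -- T2 strictly increasing
  have hT2mono : StrictMonoOn T2 (Ioo xm xM) := by
    intro ℓ1 h1 ℓ2 h2 h12
    rw [hT2 ℓ1, hT2 ℓ2]
    apply integral_lt_integral_of_continuousOn_of_le_of_exists_lt hMh
      (hcont2 ℓ1 h1) (hcont2 ℓ2 h2)
    · intro x hx
      have hxIcc : x ∈ Icc xM xh := ⟨hx.1.le, hx.2⟩
      exact aux_div_le _ _ _ _ (hd2 x hxIcc) (by have := hx.1; have := h2.2; linarith)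
        (hpos2 x hxIcc) (by linarith)
    · refine ⟨xh, ⟨hMh.le, le_rfl⟩, ?_⟩
      exact aux_div_lt _ _ _ _ hdh (by have := h2.2; linarith)
        (hpos2 xh ⟨hMh.le, le_rfl⟩) (by linarith)
  -- T1 nonnegative
  have hT1nonneg : ∀ ℓ ∈ Ioo xm xM, 0 ≤ T1 ℓ := by
    intro ℓ hℓ
    rw [hT1 ℓ]
    apply intervalIntegral.integral_nonneg hlm.le
    intro x hx
    have h1 : (x - ℓ) * φ x < 0 :=
      mul_neg_of_neg_of_pos (by have := hx.2; have := hℓ.1; linarith) (hpos1 x hx)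
    rw [div_nonneg_iff]
    right
    exact ⟨hd1 x hx, h1.le⟩
  -- T2 positive
  have hT2pos : ∀ ℓ ∈ Ioo xm xM, 0 < T2 ℓ := by
    intro ℓ hℓ
    rw [hT2 ℓ]
    have h0 : (0 : ℝ) = ∫ x in xM..xh, (0 : ℝ) := by simp
    rw [h0]
    apply integral_lt_integral_of_continuousOn_of_le_of_exists_lt hMh
      continuousOn_const (hcont2 ℓ hℓ)
    · intro x hx
      have hxIcc : x ∈ Icc xM xh := ⟨hx.1.le, hx.2⟩
      have h1 : (ℓ - x) * φ x < 0 :=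
        mul_neg_of_neg_of_pos (by have := hx.1; have := hℓ.2; linarith) (hpos2 x hxIcc)
      rw [div_nonneg_iff]
      right
      exact ⟨hd2 x hxIcc, h1.le⟩
    · refine ⟨xh, ⟨hMh.le, le_rfl⟩, ?_⟩
      have h1 : (ℓ - xh) * φ xh < 0 :=
        mul_neg_of_neg_of_pos (by have := hℓ.2; linarith) (hpos2 xh ⟨hMh.le, le_rfl⟩)
      exact div_pos_of_neg_of_neg hdh h1
  refine ⟨hT1anti, hT2mono, ?_⟩
  intro ℓ1 h1 ℓ2 h2 h12
  simp only
  have hA : T1 ℓ2 < T1 ℓ1 := hT1anti h1 h2 h12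
  have hA2 : 0 ≤ T1 ℓ2 := hT1nonneg ℓ2 h2
  have hB1 : 0 < T2 ℓ1 := hT2pos ℓ1 h1
  have hB : T2 ℓ1 < T2 ℓ2 := hT2mono h1 h2 h12
  rw [div_lt_div_iff₀ (by linarith) hB1]
  nlinarith
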